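/- Let n ≥ 2 and p > 0. The symmetrized ellipsoid 𝔼_{p,n} is a bounded domain (a bounded, open, connected subset of ℂⁿ) which is (1,2,…,n)-balanced: for every (z₁,…,z_n) ∈ 𝔼_{p,n} and every λ ∈ ℂ with |λ| ≤ 1, the point (λz₁, λ²z₂, …, λⁿz_n) belongs to 𝔼_{p,n}. -/

import Mathlib

open Finset

/-- The symmetrization map `π_n : ℂⁿ → ℂⁿ`, whose `k`-th component is the
`(k+1)`-st elementary symmetric polynomial of the coordinates. -/
noncomputable def piMap (n : ℕ) (z : Fin n → ℂ) : Fin n → ℂ :=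
  fun k => ∑ s ∈ Finset.powersetCard (k.1 + 1) Finset.univ, ∏ j ∈ s, z j

/-- The generalized complex ellipsoid `𝔹_{p,n} = {z : ∑ |z_j|^(2p) < 1}`. -/
noncomputable def ellipsoid (p : ℝ) (n : ℕ) : Set (Fin n → ℂ) :=
  {z | ∑ j, ‖z j‖ ^ (2 * p) < 1}

/-- The symmetrized `(p,n)`-ellipsoid `𝔼_{p,n} = π_n(𝔹_{p,n})`. -/
noncomputable def symEllipsoid (p : ℝ) (n : ℕ) : Set (Fin n → ℂ) :=
  piMap n '' ellipsoid p n

/-- The Euclidean unit ball in `ℂⁿ`. -/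
def unitBall (n : ℕ) : Set (Fin n → ℂ) :=
  {z | ∑ j, ‖z j‖ ^ 2 < 1}

/-- `f` is a proper holomorphic map from the domain `D` onto (into) the domain `G`:
it is holomorphic on `D`, maps `D` into `G`, and preimages of compact subsets of `G`
are compact. -/
def IsProperHolomorphic {n : ℕ} (f : (Fin n → ℂ) → (Fin n → ℂ))
    (D G : Set (Fin n → ℂ)) : Prop :=
  DifferentiableOn ℂ f D ∧ Set.MapsTo f D G ∧
    ∀ K : Set (Fin n → ℂ), K ⊆ G → IsCompact K → IsCompact (D ∩ f ⁻¹' K)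

/-- `φ` is an automorphism of the domain `D`: a holomorphic bijection of `D` onto
itself with holomorphic inverse. -/
def IsAutomorphismOf {n : ℕ} (φ : (Fin n → ℂ) → (Fin n → ℂ))
    (D : Set (Fin n → ℂ)) : Prop :=
  DifferentiableOn ℂ φ D ∧ Set.BijOn φ D D ∧
    ∃ ψ : (Fin n → ℂ) → (Fin n → ℂ), DifferentiableOn ℂ ψ D ∧ Set.InvOn ψ φ D D

/-- `f : ℂⁿ → ℂⁿ` is a polynomial mapping. -/
def IsPolynomialMap {n : ℕ} (f : (Fin n → ℂ) → (Fin n → ℂ)) : Prop :=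
  ∃ P : Fin n → MvPolynomial (Fin n) ℂ, ∀ z k, f z k = MvPolynomial.eval z (P k)

/-!
The coordinates of `z` are the roots of `∏ j, (X - z j)`, whose coefficients are, up to sign,
the components of `π_n z`. Hence `π_n` is surjective (ℂ is algebraically closed), it is proper
(Cauchy's bound on roots in terms of coefficients), and `π_n z` determines the multiset of
coordinates of `z`, so that `π_n⁻¹(𝔼_{p,n}) = 𝔹_{p,n}`. A proper surjection is a quotient map,
so `𝔼_{p,n}` is open because `𝔹_{p,n}` is; boundedness and connectedness pass to continuous
images of the compact ball and of the star-convex `𝔹_{p,n}`, and balancedness comes from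
`π_n(λz)_k = λ^k π_n(z)_k`.
-/

open Polynomial

namespace Multiset

theorem eq_of_card_eq_of_esymm_eq {R : Type*} [CommRing R] [IsDomain R] {s t : Multiset R}
    (hcard : card s = card t) (h : ∀ k, 0 < k → k ≤ card s → s.esymm k = t.esymm k) :
    s = t := by
  have hprod : (s.map fun a => X - C a).prod = (t.map fun a => X - C a).prod := by
    rw [prod_X_sub_X_eq_sum_esymm, prod_X_sub_X_eq_sum_esymm, ← hcard]
    refine Finset.sum_congr rfl fun k hk => ?_
    rcases Nat.eq_zero_or_pos k with rfl | hk0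
    · simp [esymm, powersetCard_zero_left]
    · rw [h k hk0 (Nat.lt_succ_iff.mp (Finset.mem_range.mp hk))]
  simpa only [roots_multiset_prod_X_sub_C] using congrArg roots hprod

theorem norm_lt_of_forall_norm_esymm_le {K : Type*} [NormedField K] {s : Multiset K} {B : ℝ}
    (hB : ∀ k, 0 < k → k ≤ card s → ‖s.esymm k‖ ≤ B) {a : K} (ha : a ∈ s) :
    ‖a‖ < B + 1 := by
  set P := (s.map fun a => X - C a).prod
  have hmonic : P.Monic := monic_multiset_prod_of_monic _ _ fun a _ => monic_X_sub_C a
  have hdeg : P.natDegree = card s := natDegree_multiset_prod_X_sub_C_eq_card s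
  have hroot : P.IsRoot a := by
    simpa [P, eval_multiset_prod, Multiset.prod_eq_zero_iff, sub_eq_zero] using ha
  have hcoeff : ∀ k ∈ Finset.range P.natDegree, ‖P.coeff k‖₊ ≤ B.toNNReal := by
    intro k hk
    rw [hdeg, Finset.mem_range] at hk
    rw [← NNReal.coe_le_coe, coe_nnnorm, prod_X_sub_C_coeff s hk.le, norm_mul, norm_pow,
      norm_neg, norm_one, one_pow, one_mul]
    exact (hB _ (by omega) (by omega)).trans (le_max_left _ _)
  have hbound : Polynomial.cauchyBound P ≤ B.toNNReal + 1 := by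
    rw [cauchyBound, hmonic.leadingCoeff, nnnorm_one, div_one]
    gcongr
    exact Finset.sup_le hcoeff
  have := (hroot.norm_lt_cauchyBound hmonic.ne_zero).trans_le hbound
  have hB0 : 0 ≤ B :=
    (norm_nonneg _).trans (hB 1 one_pos (card_pos_iff_exists_mem.mpr ⟨a, ha⟩))
  rw [← NNReal.coe_lt_coe] at this
  simpa [hB0] using this

theorem exists_card_eq_esymm_eq {K : Type*} [Field K] [IsAlgClosed K] (n : ℕ) (e : ℕ → K) :
    ∃ s : Multiset K, card s = n ∧ ∀ k, 0 < k → k ≤ n → s.esymm k = e k := by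
  -- By Vieta, the roots of this monic polynomial have elementary symmetric functions `e k`.
  set q : K[X] := X ^ n + ∑ k ∈ Finset.range n, C ((-1) ^ (n - k) * e (n - k)) * X ^ k
  have hlow : (∑ k ∈ Finset.range n, C ((-1) ^ (n - k) * e (n - k)) * X ^ k).degree
      < (X ^ n : K[X]).degree := by
    rw [degree_X_pow,
      ← Fin.sum_univ_eq_sum_range fun k => C ((-1) ^ (n - k) * e (n - k)) * X ^ k]
    exact degree_sum_fin_lt _
  have hmonic : q.Monic := (monic_X_pow n).add_of_left hlow
  have hdeg : q.natDegree = n := by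
    rw [natDegree_add_eq_left_of_degree_lt hlow, natDegree_X_pow]
  have hcard : card q.roots = q.natDegree := splits_iff_card_roots.mp (IsAlgClosed.splits q)
  refine ⟨q.roots, hcard.trans hdeg, fun k hk0 hkn => ?_⟩
  have hvieta := coeff_eq_esymm_roots_of_card hcard (k := n - k) (by omega)
  rw [hmonic.leadingCoeff, hdeg, Nat.sub_sub_self hkn] at hvieta
  have hq : q.coeff (n - k) = (-1) ^ k * e k := by
    simp only [q, coeff_add, coeff_X_pow, if_neg (show n - k ≠ n by omega), zero_add,
      finsetSum_coeff, coeff_C_mul_X_pow, Finset.sum_ite_eq, Finset.mem_range,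
      if_pos (show n - k < n by omega), Nat.sub_sub_self hkn]
  rw [hq, one_mul] at hvieta
  exact (mul_left_cancel₀ (pow_ne_zero _ (neg_ne_zero.mpr one_ne_zero)) hvieta).symm

theorem exists_map_univ_eq {α : Type*} {n : ℕ} {s : Multiset α} (hs : card s = n) :
    ∃ z : Fin n → α, univ.val.map z = s := by
  subst hs
  refine ⟨fun i => s.toList.get (i.cast s.length_toList.symm), ?_⟩
  rw [Fin.univ_val_map, ← List.ofFn_congr s.length_toList, List.ofFn_get, Multiset.coe_toList]

end Multiset

section Ellipsoid

variable {p : ℝ} {n : ℕ}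

lemma isOpen_ellipsoid (hp : 0 ≤ p) : IsOpen (ellipsoid p n) :=
  isOpen_lt (continuous_finsetSum _ fun j _ =>
    (Real.continuous_rpow_const (by positivity)).comp (continuous_apply j).norm) continuous_const

lemma zero_mem_ellipsoid (hp : 0 < p) : (0 : Fin n → ℂ) ∈ ellipsoid p n := by
  simp [ellipsoid, Real.zero_rpow (by positivity : 2 * p ≠ 0)]

lemma smul_mem_ellipsoid (hp : 0 ≤ p) {l : ℂ} (hl : ‖l‖ ≤ 1) {z : Fin n → ℂ}
    (hz : z ∈ ellipsoid p n) : l • z ∈ ellipsoid p n := by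
  refine lt_of_le_of_lt (Finset.sum_le_sum fun j _ => ?_)
    (show ∑ j, ‖z j‖ ^ (2 * p) < 1 from hz)
  rw [Pi.smul_apply, smul_eq_mul, norm_mul, Real.mul_rpow (norm_nonneg _) (norm_nonneg _)]
  exact mul_le_of_le_one_left (by positivity) (Real.rpow_le_one (norm_nonneg l) hl (by positivity))

lemma starConvex_ellipsoid (hp : 0 ≤ p) : StarConvex ℝ 0 (ellipsoid p n) :=
  starConvex_zero_iff.mpr fun z hz a ha0 ha1 => by
    rw [RCLike.real_smul_eq_coe_smul (K := ℂ)]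
    exact smul_mem_ellipsoid hp (by simpa [abs_of_nonneg ha0] using ha1) hz

lemma ellipsoid_subset_closedBall (hp : 0 < p) :
    ellipsoid p n ⊆ Metric.closedBall 0 1 := by
  intro z (hz : ∑ j, ‖z j‖ ^ (2 * p) < 1)
  rw [mem_closedBall_zero_iff, pi_norm_le_iff_of_nonneg zero_le_one]
  intro j
  by_contra! hj
  have hle : ‖z j‖ ^ (2 * p) ≤ ∑ i, ‖z i‖ ^ (2 * p) :=
    Finset.single_le_sum (f := fun i => ‖z i‖ ^ (2 * p)) (fun i _ => by positivity)
      (Finset.mem_univ j)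
  have := Real.one_lt_rpow hj (by positivity : 0 < 2 * p)
  exact (hz.trans_le' hle).not_gt this

lemma mem_ellipsoid_of_map_univ_eq {z w : Fin n → ℂ} (h : univ.val.map z = univ.val.map w)
    (hz : z ∈ ellipsoid p n) : w ∈ ellipsoid p n := by
  have hsum (v : Fin n → ℂ) :
      ∑ j, ‖v j‖ ^ (2 * p) = ((univ.val.map v).map (‖·‖ ^ (2 * p))).sum := by
    rw [Multiset.map_map, Finset.sum_map_val]; rfl
  change ∑ j, ‖w j‖ ^ (2 * p) < 1
  rw [hsum, ← h, ← hsum]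
  exact hz

end Ellipsoid

section piMap

variable {n : ℕ}

lemma piMap_apply (z : Fin n → ℂ) (k : Fin n) :
    piMap n z k = (univ.val.map z).esymm (k + 1) :=
  (Finset.esymm_map_val z univ _).symm

lemma piMap_smul (l : ℂ) (z : Fin n → ℂ) (k : Fin n) :
    piMap n (l • z) k = l ^ (k.1 + 1) * piMap n z k := by
  simp only [piMap, Pi.smul_apply, smul_eq_mul, Finset.mul_sum]
  refine Finset.sum_congr rfl fun s hs => ?_
  rw [Finset.prod_mul_distrib, Finset.prod_const, (Finset.mem_powersetCard.mp hs).2]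

lemma continuous_piMap : Continuous (piMap n) := by
  unfold piMap; fun_prop

lemma map_univ_eq_of_piMap_eq {z w : Fin n → ℂ} (h : piMap n z = piMap n w) :
    univ.val.map z = univ.val.map w := by
  refine Multiset.eq_of_card_eq_of_esymm_eq (by simp) fun k hk0 hkn => ?_
  have hk : k - 1 < n := by
    simp only [Fin.univ_val_map, Multiset.coe_card, List.length_ofFn] at hkn; omega
  simpa [piMap_apply, Nat.sub_add_cancel hk0] using congrFun h ⟨k - 1, hk⟩

lemma piMap_surjective : Function.Surjective (piMap n) := by
  intro w
  obtain ⟨s, hs, hesymm⟩ :=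
    Multiset.exists_card_eq_esymm_eq n fun k => if h : k - 1 < n then w ⟨k - 1, h⟩ else 0
  obtain ⟨z, rfl⟩ := Multiset.exists_map_univ_eq hs
  exact ⟨z, funext fun k => by rw [piMap_apply, hesymm _ k.1.succ_pos k.2]; simp⟩

lemma norm_le_norm_piMap_add_one (z : Fin n → ℂ) : ‖z‖ ≤ ‖piMap n z‖ + 1 := by
  refine (pi_norm_le_iff_of_nonneg (by positivity)).mpr fun i => le_of_lt ?_
  refine Multiset.norm_lt_of_forall_norm_esymm_le (fun k hk0 hkn => ?_)
    (Multiset.mem_map_of_mem z (Finset.mem_univ_val i))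
  have hk : k - 1 < n := by
    simp only [Fin.univ_val_map, Multiset.coe_card, List.length_ofFn] at hkn; omega
  rw [← Nat.sub_add_cancel hk0]
  exact (piMap_apply z ⟨k - 1, hk⟩).symm ▸ norm_le_pi_norm (piMap n z) _

lemma isProperMap_piMap : IsProperMap (piMap n) := by
  rw [isProperMap_iff_isCompact_preimage]
  refine ⟨continuous_piMap, fun K hK => ?_⟩
  obtain ⟨R, hR⟩ := hK.isBounded.subset_closedBall 0
  refine Metric.isCompact_of_isClosed_isBounded (hK.isClosed.preimage (continuous_piMap))
    ((Metric.isBounded_closedBall (x := 0) (r := R + 1)).subset fun z hz => ?_)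
  have hzR := hR hz
  rw [mem_closedBall_zero_iff] at hzR ⊢
  exact (norm_le_norm_piMap_add_one z).trans (by gcongr)

lemma isQuotientMap_piMap : Topology.IsQuotientMap (piMap n) :=
  isProperMap_piMap.isClosedMap.isQuotientMap (continuous_piMap) piMap_surjective

lemma preimage_symEllipsoid {p : ℝ} :
    piMap n ⁻¹' symEllipsoid p n = ellipsoid p n :=
  Set.Subset.antisymm
    (fun _ ⟨_, hw, h⟩ => mem_ellipsoid_of_map_univ_eq (map_univ_eq_of_piMap_eq h) hw)
    (Set.subset_preimage_image _ _)

end piMap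

theorem symEllipsoid_bounded_balanced_domain_general (n : ℕ) (p : ℝ)
    (hp : 0 < p) :
    Bornology.IsBounded (symEllipsoid p n) ∧
      IsOpen (symEllipsoid p n) ∧
      IsConnected (symEllipsoid p n) ∧
      ∀ z ∈ symEllipsoid p n, ∀ l : ℂ, ‖l‖ ≤ 1 →
        (fun k : Fin n => l ^ (k.1 + 1) * z k) ∈ symEllipsoid p n := by
  refine ⟨?_, ?_, ?_, ?_⟩
  · exact ((isCompact_closedBall 0 1).image (continuous_piMap)).isBounded.subset
      (Set.image_mono (ellipsoid_subset_closedBall hp))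
  · rw [← isQuotientMap_piMap.isOpen_preimage, preimage_symEllipsoid]
    exact isOpen_ellipsoid hp.le
  · exact ((starConvex_ellipsoid hp.le).isPathConnected (zero_mem_ellipsoid hp)).isConnected.image
      _ continuous_piMap.continuousOn
  · rintro _ ⟨z, hz, rfl⟩ l hl
    exact ⟨l • z, smul_mem_ellipsoid hp.le hl hz, funext (piMap_smul l z)⟩

/-- `𝔼_{p,n}` is a bounded domain which is `(1,2,…,n)`-balanced. -/
theorem symEllipsoid_bounded_balanced_domain (n : ℕ) (hn : 2 ≤ n) (p : ℝ)
    (hp : 0 < p) :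
    Bornology.IsBounded (symEllipsoid p n) ∧
      IsOpen (symEllipsoid p n) ∧
      IsConnected (symEllipsoid p n) ∧
      ∀ z ∈ symEllipsoid p n, ∀ l : ℂ, ‖l‖ ≤ 1 →
        (fun k : Fin n => l ^ (k.1 + 1) * z k) ∈ symEllipsoid p n :=
  symEllipsoid_bounded_balanced_domain_general n p hp
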